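/- Resolution implies DPLL: for every CNF formula Δ and clause C, if Δ ⊢ᵣⁿ C is derivable in the sized resolution proof system for some n, then the DPLL sequent C̄ ⊢ Δ is derivable in the DPLL proof system, where C̄ = {l̄ : l ∈ C} is the valuation consisting of the opposites of the literals of C. -/
import Mathlib


/-- A literal: a propositional variable (ℕ) with a sign. -/
structure Lit where
  var : ℕ
  sign : Bool
deriving DecidableEq

/-- The opposite literal. -/
def Lit.neg (l : Lit) : Lit := ⟨l.var, !l.sign⟩

/-- A clause: a finite set of literals, read disjunctively. -/
abbrev Clause := Finset Lit

/-- A CNF formula: a finite set of clauses, read conjunctively. -/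
abbrev CNF := Finset Clause

/-- A valuation: a finite set of literals, read conjunctively. -/
abbrev Valu := Finset Lit

/-- A model: a boolean assignment to literals respecting negation. -/
def IsModel (M : Lit → Bool) : Prop := ∀ l : Lit, M l = true ↔ ¬ (M (Lit.neg l) = true)

/-- `M ⊨ Γ` for a valuation (set of literals) `Γ`. -/
def SatVal (M : Lit → Bool) (Γ : Valu) : Prop := ∀ l ∈ Γ, M l = true

/-- `M ⊨ Δ` for a CNF formula `Δ`. -/
def SatCNF (M : Lit → Bool) (Δ : CNF) : Prop := ∀ C ∈ Δ, ∃ l ∈ C, M l = true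

/-- A consistent valuation. -/
def Consistent (Γ : Valu) : Prop := ∀ l ∈ Γ, Lit.neg l ∉ Γ

/-- The DPLL derivability relation `Γ ⊢ Δ`. -/
inductive DPLL : Valu → CNF → Prop
  | conflict (Γ : Valu) (Δ : CNF) : (∅ : Clause) ∈ Δ → DPLL Γ Δ
  | unit (Γ : Valu) (Δ : CNF) (l : Lit) : ({l} : Clause) ∈ Δ →
      DPLL (insert l Γ) (Δ.erase {l}) → DPLL Γ Δ
  | elim (Γ : Valu) (Δ : CNF) (C : Clause) (l : Lit) : l ∈ Γ → l ∈ C → C ∈ Δ →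
      DPLL Γ (Δ.erase C) → DPLL Γ Δ
  | red (Γ : Valu) (Δ : CNF) (C : Clause) (l : Lit) : l ∈ Γ → Lit.neg l ∈ C → C ∈ Δ →
      DPLL Γ (insert (C.erase (Lit.neg l)) (Δ.erase C)) → DPLL Γ Δ
  | split (Γ : Valu) (Δ : CNF) (l : Lit) :
      DPLL (insert l Γ) Δ → DPLL (insert (Lit.neg l) Γ) Δ → DPLL Γ Δ

/-- The sized DPLL derivability relation `Γ ⊢ⁿ Δ`. -/
inductive DPLLn : Valu → ℕ → CNF → Prop
  | conflict (Γ : Valu) (Δ : CNF) : (∅ : Clause) ∈ Δ → DPLLn Γ 0 Δ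
  | unit (Γ : Valu) (Δ : CNF) (l : Lit) (n : ℕ) : ({l} : Clause) ∈ Δ →
      DPLLn (insert l Γ) n (Δ.erase {l}) → DPLLn Γ (n + 1) Δ
  | elim (Γ : Valu) (Δ : CNF) (C : Clause) (l : Lit) (n : ℕ) : l ∈ Γ → l ∈ C → C ∈ Δ →
      DPLLn Γ n (Δ.erase C) → DPLLn Γ (n + 1) Δ
  | red (Γ : Valu) (Δ : CNF) (C : Clause) (l : Lit) (n : ℕ) : l ∈ Γ → Lit.neg l ∈ C → C ∈ Δ →
      DPLLn Γ n (insert (C.erase (Lit.neg l)) (Δ.erase C)) → DPLLn Γ (n + 1) Δ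
  | split (Γ : Valu) (Δ : CNF) (l : Lit) (n m : ℕ) :
      DPLLn (insert l Γ) n Δ → DPLLn (insert (Lit.neg l) Γ) m Δ → DPLLn Γ (n + m + 1) Δ

/-- The sized resolution derivability relation `Δ ⊢ᵣⁿ C`. -/
inductive Res : CNF → ℕ → Clause → Prop
  | sub (Δ : CNF) (C₀ C : Clause) : C₀ ∈ Δ → C₀ ⊆ C → Res Δ 0 C
  | res (Δ : CNF) (C C' : Clause) (l : Lit) (n m : ℕ) :
      Res Δ n (insert l C) → Res Δ m (insert (Lit.neg l) C') → Res Δ (n + m + 1) (C ∪ C')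

lemma Lit.neg_neg (l : Lit) : Lit.neg (Lit.neg l) = l := by
  cases l with
  | mk v s => simp [Lit.neg]

lemma dpll_mono {Γ Γ' : Valu} {Δ : CNF} (h : DPLL Γ Δ) (hs : Γ ⊆ Γ') : DPLL Γ' Δ := by
  induction h generalizing Γ' with
  | conflict Γ Δ h => exact DPLL.conflict _ _ h
  | unit Γ Δ l h _ ih =>
      exact DPLL.unit _ _ l h (ih (Finset.insert_subset_insert _ hs))
  | elim Γ Δ C l hl hlC hC _ ih => exact DPLL.elim _ _ C l (hs hl) hlC hC (ih hs)
  | red Γ Δ C l hl hlC hC _ ih => exact DPLL.red _ _ C l (hs hl) hlC hC (ih hs)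
  | split Γ Δ l _ _ ih1 ih2 =>
      exact DPLL.split _ _ l (ih1 (Finset.insert_subset_insert _ hs))
        (ih2 (Finset.insert_subset_insert _ hs))

lemma dpll_strip : ∀ (k : ℕ) (C₀ : Clause) (Γ : Valu) (Δ : CNF), C₀.card ≤ k →
    C₀ ∈ Δ → (∀ l ∈ C₀, Lit.neg l ∈ Γ) → DPLL Γ Δ := by
  intro k
  induction k with
  | zero =>
      intro C₀ Γ Δ hc hmem _
      have : C₀ = ∅ := Finset.card_eq_zero.mp (Nat.le_zero.mp hc)
      exact DPLL.conflict _ _ (this ▸ hmem)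
  | succ k ih =>
      intro C₀ Γ Δ hc hmem hneg
      rcases Finset.eq_empty_or_nonempty C₀ with h0 | ⟨l, hl⟩
      · exact DPLL.conflict _ _ (h0 ▸ hmem)
      · have hnl : Lit.neg l ∈ Γ := hneg l hl
        have hnn : Lit.neg (Lit.neg l) = l := Lit.neg_neg l
        refine DPLL.red Γ Δ C₀ (Lit.neg l) hnl (by rw [hnn]; exact hl) hmem ?_
        rw [hnn]
        refine ih (C₀.erase l) Γ _ ?_ (Finset.mem_insert_self _ _) ?_
        · have := Finset.card_erase_of_mem hl
          omega
        · intro x hx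
          exact hneg x (Finset.mem_of_mem_erase hx)

/-- Resolution implies DPLL. -/
theorem resolution_to_dpll (Δ : CNF) (C : Clause) (n : ℕ) (h : Res Δ n C) :
    DPLL (C.image Lit.neg) Δ := by
  induction h with
  | sub C₀ C hmem hsub =>
      refine dpll_strip C₀.card C₀ _ Δ le_rfl hmem ?_
      intro l hl
      exact Finset.mem_image_of_mem _ (hsub hl)
  | res A B l n m _ _ ih1 ih2 =>
      refine DPLL.split _ _ l ?_ ?_
      · -- need DPLL (insert l ((A ∪ B).image neg)) Δ; from ih2
        refine dpll_mono ih2 ?_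
        intro x hx
        rcases Finset.mem_image.mp hx with ⟨y, hy, rfl⟩
        rcases Finset.mem_insert.mp hy with rfl | hy
        · rw [Lit.neg_neg]; exact Finset.mem_insert_self _ _
        · exact Finset.mem_insert_of_mem (Finset.mem_image_of_mem _ (Finset.mem_union_right _ hy))
      · refine dpll_mono ih1 ?_
        intro x hx
        rcases Finset.mem_image.mp hx with ⟨y, hy, rfl⟩
        rcases Finset.mem_insert.mp hy with rfl | hy
        · exact Finset.mem_insert_self _ _
        · exact Finset.mem_insert_of_mem (Finset.mem_image_of_mem _ (Finset.mem_union_left _ hy))
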